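/- (Key lemma, partial-functions version) There exists a constant C > 0 such that the following holds. Let D ⊆ {0,1}^n be nonempty and let f : {0,1}^n → {0, …, n} satisfy f(x) = |x| for all x ∈ D. Suppose f(x) = h(g_1(x), …, g_m(x)) for all x ∈ {0,1}^n, where g_1, …, g_m : {0,1}^n → {0,1} and h : {0,1}^m → {0, …, n}, and suppose at most q of the inner functions g_1, …, g_m depend on coordinate i. Let X be uniformly distributed on D. Then H[X_i | (g_1(X), …, g_m(X))] ≤ 1 + Pr[X^{⊕i} ∉ D] − 2^(−C·q). -/

import Mathlib

/-- The Hamming weight of `x ∈ {0,1}^n`: the number of coordinates equal to `1`. -/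
def hw (n : ℕ) (x : Fin n → Bool) : ℕ := (Finset.univ.filter (fun i => x i = true)).card

/-- `x^{⊕i}`: `x` with its `i`-th coordinate flipped. -/
def flipBit {n : ℕ} (i : Fin n) (x : Fin n → Bool) : Fin n → Bool :=
  Function.update x i (!x i)

/-- `g` depends on coordinate `i` if flipping that coordinate can change its output. -/
def DependsOnCoord {n : ℕ} (g : (Fin n → Bool) → Bool) (i : Fin n) : Prop :=
  ∃ x, g x ≠ g (flipBit i x)

/-- The Shannon entropy (base 2) of the random variable `A : Ω → α`, where the underlying
sample point is drawn uniformly from the finite set `S`.  (The convention `0 ⬝ log₂ 0 = 0`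
holds automatically since `Real.logb 2 0 = 0`.) -/
noncomputable def entU {Ω α : Type*} [Fintype α] [DecidableEq α]
    (S : Finset Ω) (A : Ω → α) : ℝ :=
  ∑ a : α,
    (((S.filter (fun ω => A ω = a)).card : ℝ) / (S.card : ℝ)) *
      Real.logb 2 ((((S.filter (fun ω => A ω = a)).card : ℝ) / (S.card : ℝ)))⁻¹

/-- The conditional Shannon entropy (base 2) `H[A | B]` of `A : Ω → α` given `B : Ω → β`,
where the sample point is uniform on the finite set `S`.  Each term is
`P(a, b) ⬝ log₂ (1 / P(a | b))`, and `1 / P(a | b) = P(b) / P(a, b)`. -/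
noncomputable def condEntU {Ω α β : Type*} [Fintype α] [DecidableEq α]
    [Fintype β] [DecidableEq β] (S : Finset Ω) (A : Ω → α) (B : Ω → β) : ℝ :=
  ∑ a : α, ∑ b : β,
    (((S.filter (fun ω => A ω = a ∧ B ω = b)).card : ℝ) / (S.card : ℝ)) *
      Real.logb 2 (((S.filter (fun ω => B ω = b)).card : ℝ) /
        ((S.filter (fun ω => A ω = a ∧ B ω = b)).card : ℝ))

/-- The mutual information (base 2) `I[A : B] = H[A] − H[A | B]`, where the sample point is
uniform on the finite set `S`. -/
noncomputable def mutInfoU {Ω α β : Type*} [Fintype α] [DecidableEq α]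
    [Fintype β] [DecidableEq β] (S : Finset Ω) (A : Ω → α) (B : Ω → β) : ℝ :=
  entU S A - condEntU S A B


section AUX
open Finset

lemma log_ge_one_sub_inv {x : ℝ} (hx : 0 < x) : 1 - 1/x ≤ Real.log x := by
  have h := Real.log_le_sub_one_of_pos (x := x⁻¹) (by positivity)
  rw [Real.log_inv] at h
  have : x⁻¹ = 1/x := by ring
  linarith [h, this ▸ h]

lemma G_ge (u : ℝ) (h0 : 0 ≤ u) (h1 : u ≤ 1) :
    u^2/2 ≤ (1+u)*Real.log (1+u) + (1-u)*Real.log (1-u) := by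
  set s := Real.sqrt (1+u) with hs
  set t := Real.sqrt (1-u) with ht
  have hs2 : s^2 = 1+u := Real.sq_sqrt (by linarith)
  have ht2 : t^2 = 1-u := Real.sq_sqrt (by linarith)
  have hspos : 0 < s := Real.sqrt_pos.2 (by linarith)
  have htnn : 0 ≤ t := Real.sqrt_nonneg _
  have hls : Real.log (1+u) = 2 * Real.log s := by
    rw [hs, Real.log_sqrt (by linarith)]; ring
  have hbs : (1+u) * Real.log (1+u) ≥ 2*s^2 - 2*s := by
    have := log_ge_one_sub_inv hspos
    have h2 : (1+u) * Real.log (1+u) = 2 * s^2 * Real.log s := by rw [hls, hs2]; ring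
    rw [h2]
    have h3 := mul_le_mul_of_nonneg_left this (by positivity : (0:ℝ) ≤ 2*s^2)
    have h4 : 2*s^2*(1-1/s) = 2*s^2 - 2*s := by field_simp
    linarith
  have hbt : (1-u) * Real.log (1-u) ≥ 2*t^2 - 2*t := by
    rcases eq_or_lt_of_le h1 with h|h
    · have : t = 0 := by rw [ht, ← h]; simp
      rw [← h] at *; simp [this]
    · have htpos : 0 < t := Real.sqrt_pos.2 (by linarith)
      have hlt : Real.log (1-u) = 2 * Real.log t := by
        rw [ht, Real.log_sqrt (by linarith)]; ring
      have := log_ge_one_sub_inv htpos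
      have h2 : (1-u) * Real.log (1-u) = 2 * t^2 * Real.log t := by rw [hlt, ht2]; ring
      rw [h2]
      have h3 := mul_le_mul_of_nonneg_left this (by positivity : (0:ℝ) ≤ 2*t^2)
      have h4 : 2*t^2*(1-1/t) = 2*t^2 - 2*t := by field_simp
      linarith
  -- now s^2+t^2 = 2, (s*t)^2 = 1-u^2, need 4 - 2(s+t) ≥ u^2/2
  have hst2 : (s*t)^2 = 1 - u^2 := by rw [mul_pow, hs2, ht2]; ring
  have hstnn : 0 ≤ s*t := by positivity
  have hst : s*t ≤ 1 - u^2/2 := by nlinarith [sq_nonneg (s*t - (1 - u^2/2)), sq_nonneg u]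
  have hsum : s + t ≤ 2 - u^2/4 := by
    nlinarith [sq_nonneg (s+t), hstnn, sq_nonneg u, hspos.le, htnn]
  nlinarith

lemma ent_pair_aux {x y : ℝ} (hx : 0 < x) (hxy : x ≤ y) :
    x * Real.logb 2 ((x+y)/x) + y * Real.logb 2 ((x+y)/y) ≤
      (x+y) - (x-y)^2/(4*(x+y)) := by
  have hy : 0 < y := lt_of_lt_of_le hx hxy
  have hS : 0 < x + y := by linarith
  set u := (y - x)/(x+y) with hu
  have h0u : 0 ≤ u := div_nonneg (by linarith) hS.le
  have h1u : u ≤ 1 := by rw [hu, div_le_one hS]; linarith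
  have h1pu : 1 + u = 2*y/(x+y) := by
    rw [hu, eq_div_iff hS.ne', add_mul, div_mul_cancel₀ _ hS.ne']; ring
  have h1mu : 1 - u = 2*x/(x+y) := by
    rw [hu, eq_div_iff hS.ne', sub_mul, div_mul_cancel₀ _ hS.ne']; ring
  have hG := G_ge u h0u h1u
  have hl2 : (0:ℝ) < Real.log 2 := Real.log_pos (by norm_num)
  -- rewrite G in terms of x y
  have e1 : (1+u)*Real.log (1+u) + (1-u)*Real.log (1-u)
      = (2/(x+y)) * ((x+y)*Real.log 2 + x*Real.log x + y*Real.log y - (x+y)*Real.log (x+y)) := by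
    rw [h1pu, h1mu, show (2*y/(x+y)) = 2*y/(x+y) from rfl]
    rw [Real.log_div (by positivity) (by positivity), Real.log_div (by positivity) (by positivity),
      Real.log_mul (by norm_num) (ne_of_gt hy), Real.log_mul (by norm_num) (ne_of_gt hx)]
    field_simp
    ring
  rw [e1] at hG
  have key : (x+y)*Real.log (x+y) - x*Real.log x - y*Real.log y
      ≤ (x+y)*Real.log 2 - (x+y)*u^2/4 := by
    have h5 := mul_le_mul_of_nonneg_left hG (by positivity : (0:ℝ) ≤ (x+y)/2)
    have h6 : (x+y)/2 * (2/(x+y) * ((x+y)*Real.log 2 + x*Real.log x + y*Real.log y - (x+y)*Real.log (x+y)))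
        = (x+y)*Real.log 2 + x*Real.log x + y*Real.log y - (x+y)*Real.log (x+y) := by
      field_simp
    have h7 : (x+y)/2 * (u^2/2) = (x+y)*u^2/4 := by ring
    linarith
  -- LHS in logb
  have e2 : x * Real.logb 2 ((x+y)/x) + y * Real.logb 2 ((x+y)/y)
      = ((x+y)*Real.log (x+y) - x*Real.log x - y*Real.log y) / Real.log 2 := by
    rw [Real.logb, Real.logb, Real.log_div (ne_of_gt hS) (ne_of_gt hx),
      Real.log_div (ne_of_gt hS) (ne_of_gt hy)]
    field_simp
    ring
  rw [e2]
  rw [div_le_iff₀ hl2]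
  have hu2 : (x+y)*u^2/4 = (x-y)^2/(4*(x+y)) := by
    rw [hu]; field_simp; ring
  have hlog2le : Real.log 2 ≤ 1 := by
    have := Real.log_two_lt_d9; linarith
  have hq : 0 ≤ (x-y)^2/(4*(x+y)) := by positivity
  calc (x+y)*Real.log (x+y) - x*Real.log x - y*Real.log y
      ≤ (x+y)*Real.log 2 - (x+y)*u^2/4 := key
    _ = (x+y)*Real.log 2 - (x-y)^2/(4*(x+y)) := by rw [hu2]
    _ ≤ ((x+y) - (x-y)^2/(4*(x+y))) * Real.log 2 := by nlinarith

lemma ent_pair {x y : ℝ} (hx : 0 ≤ x) (hy : 0 ≤ y) :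
    x * Real.logb 2 ((x+y)/x) + y * Real.logb 2 ((x+y)/y) ≤
      (x+y) - (x-y)^2/(4*(x+y)) := by
  rcases eq_or_lt_of_le hx with hx0|hxp
  · rcases eq_or_lt_of_le hy with hy0|hyp
    · simp [← hx0, ← hy0]
    · rw [← hx0]
      have : (0+y)/y = 1 := by rw [zero_add, div_self hyp.ne']
      rw [this]
      simp only [Real.logb_one, mul_zero, zero_mul, zero_add, add_zero]
      have : (0-y)^2/(4*(0+y)) = y/4 := by field_simp; ring
      rw [zero_sub, zero_add] at *
      nlinarith
  · rcases eq_or_lt_of_le hy with hy0|hyp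
    · rw [← hy0]
      have : (x+0)/x = 1 := by rw [add_zero, div_self hxp.ne']
      rw [this]
      simp only [Real.logb_one, mul_zero, zero_mul, add_zero]
      have h3 : (x - 0)^2/(4*x) = x/4 := by field_simp; ring
      rw [h3]; linarith
    · rcases le_total x y with hle|hle
      · exact ent_pair_aux hxp hle
      · have := ent_pair_aux hyp hle
        have e1 : y + x = x + y := by ring
        have e2 : (y-x)^2 = (x-y)^2 := by ring
        rw [e1, e2] at this
        linarith

lemma flipBit_apply_same {n : ℕ} (i : Fin n) (x : Fin n → Bool) : flipBit i x i = !x i := by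
  simp [flipBit]

lemma flipBit_apply_ne {n : ℕ} (i j : Fin n) (x : Fin n → Bool) (hj : j ≠ i) :
    flipBit i x j = x j := by
  simp [flipBit, Function.update_of_ne hj]

lemma flipBit_flipBit {n : ℕ} (i : Fin n) (x : Fin n → Bool) :
    flipBit i (flipBit i x) = x := by
  funext j
  by_cases hj : j = i
  · subst hj; rw [flipBit_apply_same, flipBit_apply_same, Bool.not_not]
  · rw [flipBit_apply_ne _ _ _ hj, flipBit_apply_ne _ _ _ hj]

lemma hw_flip_true {n : ℕ} (i : Fin n) (x : Fin n → Bool) (hx : x i = true) :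
    hw n (flipBit i x) + 1 = hw n x := by
  have h1 : (Finset.univ.filter (fun j => flipBit i x j = true))
      = (Finset.univ.filter (fun j => x j = true)).erase i := by
    ext j
    by_cases hj : j = i
    · subst hj
      simp [flipBit_apply_same, hx]
    · simp [flipBit_apply_ne _ _ _ hj, hj, Finset.mem_erase]
  have h2 : i ∈ Finset.univ.filter (fun j => x j = true) := by simp [hx]
  rw [hw, hw, h1, Finset.card_erase_of_mem h2]
  have := Finset.card_pos.2 ⟨i, h2⟩
  omega

lemma hw_flip_false {n : ℕ} (i : Fin n) (x : Fin n → Bool) (hx : x i = false) :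
    hw n (flipBit i x) = hw n x + 1 := by
  have hfx : flipBit i x i = true := by rw [flipBit_apply_same, hx]; rfl
  have h1 := hw_flip_true i (flipBit i x) hfx
  rw [flipBit_flipBit] at h1
  omega

lemma hw_le {n : ℕ} (x : Fin n → Bool) : hw n x ≤ n := by
  rw [hw]
  calc (Finset.univ.filter (fun i => x i = true)).card ≤ (Finset.univ : Finset (Fin n)).card :=
        Finset.card_le_card (Finset.filter_subset _ _)
    _ = n := by simp

lemma hw_pos_of_true {n : ℕ} (i : Fin n) (x : Fin n → Bool) (hx : x i = true) :
    0 < hw n x := Finset.card_pos.2 ⟨i, by simp [hx]⟩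

lemma not_dependsOn {n : ℕ} {g : (Fin n → Bool) → Bool} {i : Fin n}
    (h : ¬ DependsOnCoord g i) (x : Fin n → Bool) : g (flipBit i x) = g x := by
  rw [DependsOnCoord] at h
  push_neg at h
  exact (h x).symm


open Classical in
/-- real-valued count of elements of `D` satisfying `p` -/
noncomputable def cnt {α : Type*} (D : Finset α) (p : α → Prop) : ℝ :=
  ((D.filter p).card : ℝ)

lemma cnt_eq {α : Type*} (D : Finset α) (p : α → Prop) [DecidablePred p] :
    cnt D p = ((D.filter p).card : ℝ) := by
  rw [cnt]
  congr 1
  exact congrArg _ (Finset.filter_congr_decidable _ _ _)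

lemma cnt_nonneg {α : Type*} (D : Finset α) (p : α → Prop) : 0 ≤ cnt D p := by
  rw [cnt]; positivity

lemma cnt_congr {α : Type*} (D : Finset α) (p q : α → Prop)
    (h : ∀ x ∈ D, p x ↔ q x) : cnt D p = cnt D q := by
  classical
  rw [cnt_eq, cnt_eq]
  norm_cast
  exact congrArg _ (Finset.filter_congr h)

lemma cnt_split {α : Type*} (D : Finset α) (p c : α → Prop) :
    cnt D p = cnt D (fun x => p x ∧ c x) + cnt D (fun x => p x ∧ ¬ c x) := by
  classical
  rw [cnt_eq, cnt_eq, cnt_eq, ← Finset.filter_filter, ← Finset.filter_filter]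
  norm_cast
  exact (Finset.card_filter_add_card_filter_not (s := D.filter p) c).symm

lemma cnt_mono {α : Type*} (D : Finset α) (p q : α → Prop)
    (h : ∀ x ∈ D, p x → q x) : cnt D p ≤ cnt D q := by
  classical
  rw [cnt_eq, cnt_eq]
  norm_cast
  apply Finset.card_le_card
  intro x hx
  rw [Finset.mem_filter] at *
  exact ⟨hx.1, h x hx.1 hx.2⟩

lemma cnt_zero {α : Type*} (D : Finset α) (p : α → Prop)
    (h : ∀ x ∈ D, ¬ p x) : cnt D p = 0 := by
  classical
  rw [cnt_eq]
  norm_cast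
  rw [Finset.card_eq_zero, Finset.filter_eq_empty_iff]
  exact h

lemma cnt_fiber {α γ : Type*} [DecidableEq γ] (D : Finset α) (p : α → Prop)
    (F : α → γ) (t : Finset γ) (hm : ∀ x ∈ D, p x → F x ∈ t) :
    cnt D p = ∑ v ∈ t, cnt D (fun x => p x ∧ F x = v) := by
  classical
  rw [cnt_eq]
  have h1 : (D.filter p).card = ∑ v ∈ t, ((D.filter p).filter (fun x => F x = v)).card :=
    Finset.card_eq_sum_card_fiberwise (fun x hx => by
      rw [Finset.mem_coe, Finset.mem_filter] at hx; exact Finset.mem_coe.2 (hm x hx.1 hx.2))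
  rw [h1]
  push_cast
  refine Finset.sum_congr rfl (fun v _ => ?_)
  rw [cnt_eq, Finset.filter_filter]

lemma cnt_total {α : Type*} (D : Finset α) : cnt D (fun _ => True) = (D.card : ℝ) := by
  classical
  rw [cnt_eq]
  norm_cast
  exact congrArg _ (Finset.filter_true_of_mem (fun _ _ => trivial))

lemma cnt_bij {α : Type*} (D : Finset α) (p q : α → Prop) (e : α → α)
    (h1 : ∀ x ∈ D, p x → e x ∈ D ∧ q (e x))
    (h2 : ∀ x ∈ D, p x → e (e x) = x)
    (h3 : ∀ y ∈ D, q y → e y ∈ D ∧ p (e y))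
    (h4 : ∀ y ∈ D, q y → e (e y) = y) :
    cnt D p = cnt D q := by
  classical
  rw [cnt_eq, cnt_eq]
  norm_cast
  apply Finset.card_bij (fun x _ => e x)
  · intro a ha
    rw [Finset.mem_filter] at *
    exact (h1 a ha.1 ha.2)
  · intro a ha b hb hab
    rw [Finset.mem_filter] at *
    rw [← h2 a ha.1 ha.2, ← h2 b hb.1 hb.2, hab]
  · intro y hy
    rw [Finset.mem_filter] at hy
    refine ⟨e y, ?_, h4 y hy.1 hy.2⟩
    rw [Finset.mem_filter]
    exact h3 y hy.1 hy.2

lemma cnt_pos {α : Type*} {D : Finset α} {p : α → Prop} (h : 0 < cnt D p) : ∃ x ∈ D, p x := by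
  classical
  rw [cnt_eq] at h
  norm_cast at h
  obtain ⟨x, hx⟩ := Finset.card_pos.1 h
  rw [Finset.mem_filter] at hx
  exact ⟨x, hx.1, hx.2⟩

end AUX

set_option maxHeartbeats 2000000 in
/-- Key lemma, partial-functions version: if `f` agrees with the Hamming weight on a
nonempty set `D`, `f = h(g_1, …, g_m)`, and coordinate `i` is queried by at most `q` inner
functions, then for `X` uniform on `D`,
`H[X_i | (g_1(X), …, g_m(X))] ≤ 1 + Pr[X^{⊕i} ∉ D] − 2^{-O(q)}`. -/
theorem key_lemma_partial :
    ∃ C : ℝ, 0 < C ∧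
      ∀ (n m q : ℕ) (i : Fin n) (D : Finset (Fin n → Bool))
        (f : (Fin n → Bool) → ℕ) (g : Fin m → (Fin n → Bool) → Bool)
        (h : (Fin m → Bool) → ℕ),
        D.Nonempty →
        (∀ x ∈ D, f x = hw n x) →
        (∀ x, f x = h (fun j => g j x)) →
        Nat.card {j : Fin m // DependsOnCoord (g j) i} ≤ q →
        condEntU D (fun x => x i) (fun x => (fun j => g j x)) ≤
          1 + ((D.filter (fun x => flipBit i x ∉ D)).card : ℝ) / (D.card : ℝ)
            - (2 : ℝ) ^ (-(C * (q : ℝ))) := by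
  refine ⟨6, by norm_num, ?_⟩
  intro n m q i D f g h hD hf hfg hq
  classical
  set N : ℝ := (D.card : ℝ) with hNdef
  have hN0 : 0 < N := by
    rw [hNdef]; exact_mod_cast Finset.card_pos.2 hD
  set Bm : (Fin n → Bool) → (Fin m → Bool) := fun x => (fun j => g j x) with hBm
  set Av : (Fin n → Bool) → Bool := fun x => x i with hAv
  have key0 : ∀ x ∈ D, hw n x = h (Bm x) := fun x hx => by
    rw [← hf x hx, hfg x]
  -- the dependent coordinates
  set J : Finset (Fin m) := Finset.univ.filter (fun j => DependsOnCoord (g j) i) with hJ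
  have hJq : J.card ≤ q := by
    rw [Nat.card_eq_fintype_card, Fintype.card_subtype] at hq
    calc J.card = (Finset.univ.filter (fun j => DependsOnCoord (g j) i)).card := rfl
      _ ≤ q := by
          rw [← Finset.filter_congr_decidable
            (Finset.univ : Finset (Fin m)) (fun j => DependsOnCoord (g j) i) (Classical.decPred _)] at hq ⊢
          exact hq
  set ρ : (Fin m → Bool) → (Fin m → Bool) := fun b j => if j ∈ J then false else b j with hρ
  set φ : (Fin n → Bool) → (Fin m → Bool) × ℕ := fun x => (ρ (Bm x), hw n x) with hφ
  set ψ : (Fin m → Bool) → (Fin m → Bool) × ℕ := fun b => (ρ b, h b) with hψ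
  have hφψ : ∀ x ∈ D, φ x = ψ (Bm x) := fun x hx => by
    rw [hφ, hψ]
    exact Prod.ext rfl (key0 x hx)
  -- counts
  set nb : (Fin m → Bool) → ℝ := fun b => cnt D (fun x => Bm x = b) with hnb
  set ct : (Fin m → Bool) → ℝ := fun b => cnt D (fun x => Av x = true ∧ Bm x = b) with hct
  set cf : (Fin m → Bool) → ℝ := fun b => cnt D (fun x => Av x = false ∧ Bm x = b) with hcf
  set d : (Fin m → Bool) → ℝ := fun b => ct b - cf b with hd
  set β : ℝ := cnt D (fun x => flipBit i x ∉ D) with hβ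
  set K : ℝ := (2:ℝ)^q with hK
  have hK1 : 1 ≤ K := one_le_pow₀ (by norm_num)
  have hβnn : 0 ≤ β := cnt_nonneg _ _
  have hnbsplit : ∀ b, nb b = ct b + cf b := by
    intro b
    have h1 := cnt_split D (fun x => Bm x = b) (fun x => Av x = true)
    have e1 : cnt D (fun x => Bm x = b ∧ Av x = true) = ct b :=
      cnt_congr _ _ _ (fun x _ => by tauto)
    have e2 : cnt D (fun x => Bm x = b ∧ ¬ (Av x = true)) = cf b :=
      cnt_congr _ _ _ (fun x _ => by simp only [Bool.not_eq_true]; tauto)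
    rw [hnb]
    dsimp only
    rw [h1, e1, e2]
  have hsum_nb : ∑ b : Fin m → Bool, nb b = N := by
    have h1 := cnt_fiber D (fun _ => True) Bm Finset.univ (fun x _ _ => Finset.mem_univ _)
    rw [cnt_total] at h1
    rw [hNdef, h1]
    refine Finset.sum_congr rfl (fun b _ => ?_)
    exact (cnt_congr _ _ _ (fun x _ => by tauto)).symm
  -- Step A : entropy bound
  have hA : condEntU D Av Bm ≤
      1 - (∑ b : Fin m → Bool, (d b)^2 / nb b)/(4*N) := by
    have hA1 : condEntU D Av Bm ≤ ∑ b : Fin m → Bool, (1/N)*(nb b - (d b)^2/(4 * nb b)) := by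
      rw [condEntU, Finset.sum_comm]
      apply Finset.sum_le_sum
      intro b _
      rw [Fintype.sum_bool]
      rw [← cnt_eq D (fun ω => Av ω = true ∧ Bm ω = b),
          ← cnt_eq D (fun ω => Av ω = false ∧ Bm ω = b),
          ← cnt_eq D (fun ω => Bm ω = b)]
      have hs : cnt D (fun x => Bm x = b) =
          cnt D (fun x => Av x = true ∧ Bm x = b) + cnt D (fun x => Av x = false ∧ Bm x = b) :=
        hnbsplit b
      have hdb : d b = cnt D (fun x => Av x = true ∧ Bm x = b)
          - cnt D (fun x => Av x = false ∧ Bm x = b) := rfl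
      have hnbb : nb b = cnt D (fun x => Bm x = b) := rfl
      rw [hnbb, hdb, hs]
      have hpair := ent_pair (cnt_nonneg D (fun x => Av x = true ∧ Bm x = b))
                             (cnt_nonneg D (fun x => Av x = false ∧ Bm x = b))
      set x := cnt D (fun x => Av x = true ∧ Bm x = b)
      set y := cnt D (fun x => Av x = false ∧ Bm x = b)
      calc x/N * Real.logb 2 ((x+y)/x) + y/N * Real.logb 2 ((x+y)/y)
          = (1/N)*(x * Real.logb 2 ((x+y)/x) + y * Real.logb 2 ((x+y)/y)) := by ring
        _ ≤ (1/N)*((x+y) - (x-y)^2/(4*(x+y))) := by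
            apply mul_le_mul_of_nonneg_left hpair (by positivity)
    have hA2 : ∑ b : Fin m → Bool, (1/N)*(nb b - (d b)^2/(4 * nb b))
        = 1 - (∑ b : Fin m → Bool, (d b)^2 / nb b)/(4*N) := by
      have e : ∀ b : Fin m → Bool, (1/N)*(nb b - (d b)^2/(4 * nb b))
          = nb b/N - ((d b)^2/nb b)/(4*N) := by
        intro b
        have h4 : (d b)^2/(4*nb b) = ((d b)^2/nb b)/4 := by
          rw [div_div, mul_comm]
        rw [h4]; ring
      rw [Finset.sum_congr rfl (fun b _ => e b), Finset.sum_sub_distrib,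
        ← Finset.sum_div, ← Finset.sum_div, hsum_nb, div_self (ne_of_gt hN0)]
    rw [← hA2]
    exact hA1
  have hT2nn : 0 ≤ ∑ b : Fin m → Bool, (d b)^2 / nb b := by
    apply Finset.sum_nonneg
    intro b _
    have : 0 ≤ nb b := cnt_nonneg _ _
    positivity
  -- Step B : Cauchy-Schwarz
  have hnn : ∀ b, 0 ≤ nb b := fun b => cnt_nonneg _ _
  have hctnn : ∀ b, 0 ≤ ct b := fun b => cnt_nonneg _ _
  have hcfnn : ∀ b, 0 ≤ cf b := fun b => cnt_nonneg _ _
  have hdz : ∀ b, nb b = 0 → d b = 0 := by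
    intro b hb
    have h1 : ct b ≤ nb b := cnt_mono D _ _ (fun x _ hx => hx.2)
    have h2 : cf b ≤ nb b := cnt_mono D _ _ (fun x _ hx => hx.2)
    have h3 : d b = ct b - cf b := rfl
    rw [h3]
    have := hctnn b; have := hcfnn b
    linarith
  have hB : (∑ b : Fin m → Bool, |d b|)^2 ≤ N * ∑ b : Fin m → Bool, (d b)^2 / nb b := by
    have hcs := Finset.sum_mul_sq_le_sq_mul_sq Finset.univ
      (fun b => Real.sqrt (nb b)) (fun b => |d b|/Real.sqrt (nb b))
    have he1 : ∀ b : Fin m → Bool, Real.sqrt (nb b) * (|d b|/Real.sqrt (nb b)) = |d b| := by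
      intro b
      rcases eq_or_lt_of_le (hnn b) with h0|h0
      · rw [← h0]
        simp [hdz b h0.symm]
      · rw [mul_div_cancel₀ _ (ne_of_gt (Real.sqrt_pos.2 h0))]
    have he2 : ∀ b : Fin m → Bool, (Real.sqrt (nb b))^2 = nb b :=
      fun b => Real.sq_sqrt (hnn b)
    have he3 : ∀ b : Fin m → Bool, (|d b|/Real.sqrt (nb b))^2 = (d b)^2/nb b := by
      intro b; rw [div_pow, sq_abs, he2]
    calc (∑ b : Fin m → Bool, |d b|)^2
        = (∑ b : Fin m → Bool, Real.sqrt (nb b) * (|d b|/Real.sqrt (nb b)))^2 := by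
          rw [Finset.sum_congr rfl (fun b _ => he1 b)]
      _ ≤ (∑ b : Fin m → Bool, (Real.sqrt (nb b))^2) *
            (∑ b : Fin m → Bool, (|d b|/Real.sqrt (nb b))^2) := hcs
      _ = N * ∑ b : Fin m → Bool, (d b)^2 / nb b := by
          rw [Finset.sum_congr rfl (fun b _ => he2 b),
              Finset.sum_congr rfl (fun b _ => he3 b), hsum_nb]
  -- Step C : combinatorial bound
  have hC : N/(2*K) - 2*β ≤ ∑ b : Fin m → Bool, |d b| := by
    set av : (Fin m → Bool) × ℕ → ℝ := fun v => cnt D (fun x => Av x = true ∧ φ x = v) with hav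
    set zv : (Fin m → Bool) × ℕ → ℝ := fun v => cnt D (fun x => Av x = false ∧ φ x = v) with hzv
    set nv : (Fin m → Bool) × ℕ → ℝ := fun v => cnt D (fun x => φ x = v) with hnv
    set bv : (Fin m → Bool) × ℕ → ℝ := fun v => cnt D (fun x => φ x = v ∧ flipBit i x ∉ D) with hbv
    set mav : (Fin m → Bool) × ℕ → ℝ := fun v => cnt D (fun x => Av x = true ∧ φ x = v ∧ flipBit i x ∈ D) with hmav
    set mzv : (Fin m → Bool) × ℕ → ℝ := fun v => cnt D (fun x => Av x = false ∧ φ x = v ∧ flipBit i x ∈ D) with hmzv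
    set bav : (Fin m → Bool) × ℕ → ℝ := fun v => cnt D (fun x => Av x = true ∧ φ x = v ∧ flipBit i x ∉ D) with hbav
    set bzv : (Fin m → Bool) × ℕ → ℝ := fun v => cnt D (fun x => Av x = false ∧ φ x = v ∧ flipBit i x ∉ D) with hbzv
    set C' : Finset (Fin m → Bool) := Finset.image ρ Finset.univ with hC'
    set W : Finset ((Fin m → Bool) × ℕ) := C' ×ˢ Finset.range (n+1) with hW
    have hbvnn : ∀ v, 0 ≤ bv v := fun v => cnt_nonneg _ _
    have hmzvnn : ∀ v, 0 ≤ mzv v := fun v => cnt_nonneg _ _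
    have hbavnn : ∀ v, 0 ≤ bav v := fun v => cnt_nonneg _ _
    have hbzvnn : ∀ v, 0 ≤ bzv v := fun v => cnt_nonneg _ _
    have hKpos : (0:ℝ) < K := by rw [hK]; positivity
    -- splits
    have hsplit1 : ∀ v, nv v = av v + zv v := by
      intro v
      show cnt D (fun x => φ x = v)
        = cnt D (fun x => Av x = true ∧ φ x = v) + cnt D (fun x => Av x = false ∧ φ x = v)
      rw [cnt_split D (fun x => φ x = v) (fun x => Av x = true)]
      congr 1
      · exact cnt_congr _ _ _ (fun x _ => by tauto)
      · exact cnt_congr _ _ _ (fun x _ => by simp only [Bool.not_eq_true]; tauto)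
    have hsplit2 : ∀ v, av v = mav v + bav v := by
      intro v
      show cnt D (fun x => Av x = true ∧ φ x = v)
        = cnt D (fun x => Av x = true ∧ φ x = v ∧ flipBit i x ∈ D)
          + cnt D (fun x => Av x = true ∧ φ x = v ∧ flipBit i x ∉ D)
      rw [cnt_split D (fun x => Av x = true ∧ φ x = v) (fun x => flipBit i x ∈ D)]
      congr 1
      · exact cnt_congr _ _ _ (fun x _ => by tauto)
      · exact cnt_congr _ _ _ (fun x _ => by tauto)
    have hsplit2z : ∀ v, zv v = mzv v + bzv v := by
      intro v
      show cnt D (fun x => Av x = false ∧ φ x = v)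
        = cnt D (fun x => Av x = false ∧ φ x = v ∧ flipBit i x ∈ D)
          + cnt D (fun x => Av x = false ∧ φ x = v ∧ flipBit i x ∉ D)
      rw [cnt_split D (fun x => Av x = false ∧ φ x = v) (fun x => flipBit i x ∈ D)]
      congr 1
      · exact cnt_congr _ _ _ (fun x _ => by tauto)
      · exact cnt_congr _ _ _ (fun x _ => by tauto)
    have hsplit3 : ∀ v, bv v = bav v + bzv v := by
      intro v
      show cnt D (fun x => φ x = v ∧ flipBit i x ∉ D)
        = cnt D (fun x => Av x = true ∧ φ x = v ∧ flipBit i x ∉ D)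
          + cnt D (fun x => Av x = false ∧ φ x = v ∧ flipBit i x ∉ D)
      rw [cnt_split D (fun x => φ x = v ∧ flipBit i x ∉ D) (fun x => Av x = true)]
      congr 1
      · exact cnt_congr _ _ _ (fun x _ => by tauto)
      · exact cnt_congr _ _ _ (fun x _ => by simp only [Bool.not_eq_true]; tauto)
    -- the flip map preserves the group
    have hρflip : ∀ x : Fin n → Bool, ρ (Bm (flipBit i x)) = ρ (Bm x) := by
      intro x
      funext j
      show (if j ∈ J then false else Bm (flipBit i x) j) = (if j ∈ J then false else Bm x j)
      by_cases hj : j ∈ J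
      · rw [if_pos hj, if_pos hj]
      · rw [if_neg hj, if_neg hj]
        have hnd : ¬ DependsOnCoord (g j) i := by
          intro hd'
          exact hj (by rw [hJ]; simp [hd'])
        exact not_dependsOn hnd x
    -- the pairing bijection
    have hpair : ∀ (c : Fin m → Bool) (w : ℕ), mav (c, w+1) = mzv (c, w) := by
      intro c w
      show cnt D (fun x => Av x = true ∧ φ x = (c, w+1) ∧ flipBit i x ∈ D)
        = cnt D (fun x => Av x = false ∧ φ x = (c, w) ∧ flipBit i x ∈ D)
      apply cnt_bij D _ _ (flipBit i)
      · rintro x hxD ⟨hxi, hxφ, hxf⟩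
        have hxi' : x i = true := hxi
        have hw1 : hw n x = w+1 := congrArg Prod.snd hxφ
        have hρ1 : ρ (Bm x) = c := congrArg Prod.fst hxφ
        refine ⟨hxf, ?_, ?_, ?_⟩
        · show flipBit i x i = false
          rw [flipBit_apply_same, hxi']
          rfl
        · show φ (flipBit i x) = (c, w)
          have h2 : hw n (flipBit i x) = w := by
            have := hw_flip_true i x hxi'
            omega
          show (ρ (Bm (flipBit i x)), hw n (flipBit i x)) = (c, w)
          rw [hρflip x, hρ1, h2]
        · rw [flipBit_flipBit]; exact hxD
      · intro x _ _; exact flipBit_flipBit i x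
      · rintro y hyD ⟨hyi, hyφ, hyf⟩
        have hyi' : y i = false := hyi
        have hw1 : hw n y = w := congrArg Prod.snd hyφ
        have hρ1 : ρ (Bm y) = c := congrArg Prod.fst hyφ
        refine ⟨hyf, ?_, ?_, ?_⟩
        · show flipBit i y i = true
          rw [flipBit_apply_same, hyi']
          rfl
        · show φ (flipBit i y) = (c, w+1)
          have h2 : hw n (flipBit i y) = w+1 := by
            rw [hw_flip_false i y hyi', hw1]
          show (ρ (Bm (flipBit i y)), hw n (flipBit i y)) = (c, w+1)
          rw [hρflip y, hρ1, h2]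
        · rw [flipBit_flipBit]; exact hyD
      · intro y _ _; exact flipBit_flipBit i y
    have hma0 : ∀ c : Fin m → Bool, mav (c, 0) = 0 := by
      intro c
      show cnt D (fun x => Av x = true ∧ φ x = (c, 0) ∧ flipBit i x ∈ D) = 0
      apply cnt_zero
      rintro x _ ⟨hxi, hxφ, _⟩
      have hw1 : hw n x = 0 := congrArg Prod.snd hxφ
      have := hw_pos_of_true i x hxi
      omega
    -- cell differences decompose into class differences
    have hS1 : ∀ v, av v - zv v = ∑ b ∈ Finset.univ.filter (fun b => ψ b = v), d b := by
      intro v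
      have h1 : av v = ∑ b ∈ Finset.univ.filter (fun b => ψ b = v), ct b := by
        show cnt D (fun x => Av x = true ∧ φ x = v) = _
        rw [cnt_fiber D (fun x => Av x = true ∧ φ x = v) Bm
          (Finset.univ.filter (fun b => ψ b = v))
          (fun x hx hpx => by
            rw [Finset.mem_filter]
            exact ⟨Finset.mem_univ _, by rw [← hφψ x hx]; exact hpx.2⟩)]
        refine Finset.sum_congr rfl (fun b hb => ?_)
        rw [Finset.mem_filter] at hb
        exact cnt_congr _ _ _ (fun x hx => by
          constructor
          · rintro ⟨⟨h1, _⟩, h3⟩; exact ⟨h1, h3⟩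
          · rintro ⟨h1, h3⟩; exact ⟨⟨h1, by rw [hφψ x hx, h3, hb.2]⟩, h3⟩)
      have h2 : zv v = ∑ b ∈ Finset.univ.filter (fun b => ψ b = v), cf b := by
        show cnt D (fun x => Av x = false ∧ φ x = v) = _
        rw [cnt_fiber D (fun x => Av x = false ∧ φ x = v) Bm
          (Finset.univ.filter (fun b => ψ b = v))
          (fun x hx hpx => by
            rw [Finset.mem_filter]
            exact ⟨Finset.mem_univ _, by rw [← hφψ x hx]; exact hpx.2⟩)]
        refine Finset.sum_congr rfl (fun b hb => ?_)
        rw [Finset.mem_filter] at hb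
        exact cnt_congr _ _ _ (fun x hx => by
          constructor
          · rintro ⟨⟨h1, _⟩, h3⟩; exact ⟨h1, h3⟩
          · rintro ⟨h1, h3⟩; exact ⟨⟨h1, by rw [hφψ x hx, h3, hb.2]⟩, h3⟩)
      rw [h1, h2, ← Finset.sum_sub_distrib]
    -- cell differences are dominated by the total class imbalance
    have hS2 : ∑ v ∈ W, |av v - zv v| ≤ ∑ b : Fin m → Bool, |d b| := by
      have hdisj : (↑W : Set ((Fin m → Bool) × ℕ)).PairwiseDisjoint
          (fun v => Finset.univ.filter (fun b => ψ b = v)) := by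
        intro v1 _ v2 _ hne
        show Disjoint (Finset.univ.filter (fun b => ψ b = v1))
          (Finset.univ.filter (fun b => ψ b = v2))
        apply Finset.disjoint_left.2
        intro b hb1 hb2
        rw [Finset.mem_filter] at hb1 hb2
        exact hne (hb1.2.symm.trans hb2.2)
      calc ∑ v ∈ W, |av v - zv v|
          = ∑ v ∈ W, |∑ b ∈ Finset.univ.filter (fun b => ψ b = v), d b| :=
            Finset.sum_congr rfl (fun v _ => by rw [hS1])
        _ ≤ ∑ v ∈ W, ∑ b ∈ Finset.univ.filter (fun b => ψ b = v), |d b| :=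
            Finset.sum_le_sum (fun v _ => Finset.abs_sum_le_sum_abs _ _)
        _ = ∑ b ∈ W.biUnion (fun v => Finset.univ.filter (fun b => ψ b = v)), |d b| :=
            (Finset.sum_biUnion hdisj).symm
        _ ≤ ∑ b : Fin m → Bool, |d b| :=
            Finset.sum_le_sum_of_subset_of_nonneg (Finset.subset_univ _)
              (fun _ _ _ => abs_nonneg _)
    -- per-group bound
    have hgroup : ∀ c ∈ C',
        (∑ w ∈ Finset.range (n+1), nv (c,w))/(2*K)
          - 2*(∑ w ∈ Finset.range (n+1), bv (c,w))
          ≤ ∑ w ∈ Finset.range (n+1), |av (c,w) - zv (c,w)| := by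
      intro c _
      set T : ℝ := ∑ w ∈ Finset.range (n+1), (|av (c,w) - zv (c,w)| + bv (c,w)) with hT
      have hTnn : 0 ≤ T :=
        Finset.sum_nonneg (fun w _ => add_nonneg (abs_nonneg _) (hbvnn _))
      set F : ℕ → ℝ := fun w => if w = 0 then 0 else mzv (c, w-1) with hF
      have hF0 : F 0 = 0 := by simp [hF]
      have hFs : ∀ w, F (w+1) = mzv (c, w) := by intro w; simp [hF]
      have hFm : ∀ w, F w = mav (c, w) := by
        intro w
        cases w with
        | zero => rw [hF0, hma0 c]
        | succ w => rw [hFs, hpair c w]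
      have habs : ∀ w, |F (w+1) - F w| ≤ |av (c,w) - zv (c,w)| + bv (c,w) := by
        intro w
        rw [hFs, hFm]
        have e1 : mzv (c,w) - mav (c,w) = (zv (c,w) - av (c,w)) + (bav (c,w) - bzv (c,w)) := by
          have h2 := hsplit2 (c,w)
          have h3 := hsplit2z (c,w)
          linarith
        rw [e1]
        calc |(zv (c,w) - av (c,w)) + (bav (c,w) - bzv (c,w))|
            ≤ |zv (c,w) - av (c,w)| + |bav (c,w) - bzv (c,w)| := abs_add_le _ _
          _ ≤ |av (c,w) - zv (c,w)| + bv (c,w) := by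
              rw [abs_sub_comm]
              have h1 : |bav (c,w) - bzv (c,w)| ≤ bav (c,w) + bzv (c,w) := by
                rw [abs_le]
                constructor
                · have := hbavnn (c,w); have := hbzvnn (c,w); linarith
                · have := hbavnn (c,w); have := hbzvnn (c,w); linarith
              have h2 := hsplit3 (c,w)
              linarith
      have hprefix : ∀ W' ∈ Finset.range (n+1), mzv (c, W') ≤ T := by
        intro W' hW'
        have h1 : F (W'+1) - F 0 = ∑ w ∈ Finset.range (W'+1), (F (w+1) - F w) :=
          (Finset.sum_range_sub F (W'+1)).symm
        have h2 : mzv (c, W') = ∑ w ∈ Finset.range (W'+1), (F (w+1) - F w) := by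
          rw [← h1, hFs, hF0, sub_zero]
        rw [h2]
        calc ∑ w ∈ Finset.range (W'+1), (F (w+1) - F w)
            ≤ ∑ w ∈ Finset.range (W'+1), |F (w+1) - F w| :=
              Finset.sum_le_sum (fun w _ => le_abs_self _)
          _ ≤ ∑ w ∈ Finset.range (n+1), |F (w+1) - F w| := by
              apply Finset.sum_le_sum_of_subset_of_nonneg
              · apply Finset.range_subset_range.2
                have := Finset.mem_range.1 hW'
                omega
              · intro _ _ _; exact abs_nonneg _
          _ ≤ T := Finset.sum_le_sum (fun w _ => habs w)
      -- support size
      set supp : Finset ℕ := (Finset.range (n+1)).filter (fun w => 0 < nv (c,w)) with hsupp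
      have hsuppK : (supp.card : ℝ) ≤ K := by
        classical
        set σ : ℕ → (↥J → Bool) := fun w =>
          if hne : ∃ x, x ∈ D ∧ φ x = (c, w) then (fun j => Bm hne.choose j.1)
          else (fun _ => false) with hσ
        have hinj : Set.InjOn σ ↑supp := by
          intro w1 hw1 w2 hw2 heq
          rw [Finset.mem_coe, hsupp, Finset.mem_filter] at hw1 hw2
          have hne1 : ∃ x, x ∈ D ∧ φ x = (c, w1) := by
            obtain ⟨x, hx1, hx2⟩ := cnt_pos hw1.2
            exact ⟨x, hx1, hx2⟩
          have hne2 : ∃ x, x ∈ D ∧ φ x = (c, w2) := by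
            obtain ⟨x, hx1, hx2⟩ := cnt_pos hw2.2
            exact ⟨x, hx1, hx2⟩
          rw [hσ] at heq
          simp only [dif_pos hne1, dif_pos hne2] at heq
          obtain ⟨hx1D, hx1φ⟩ := hne1.choose_spec
          obtain ⟨hx2D, hx2φ⟩ := hne2.choose_spec
          have hBeq : Bm hne1.choose = Bm hne2.choose := by
            funext j
            by_cases hj : j ∈ J
            · exact congrFun heq ⟨j, hj⟩
            · have e1 : ρ (Bm hne1.choose) = c := congrArg Prod.fst hx1φ
              have e2 : ρ (Bm hne2.choose) = c := congrArg Prod.fst hx2φ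
              have f1 := congrFun e1 j
              have f2 := congrFun e2 j
              show Bm hne1.choose j = Bm hne2.choose j
              rw [show ρ (Bm hne1.choose) j
                  = (if j ∈ J then false else Bm hne1.choose j) from rfl, if_neg hj] at f1
              rw [show ρ (Bm hne2.choose) j
                  = (if j ∈ J then false else Bm hne2.choose j) from rfl, if_neg hj] at f2
              rw [f1, f2]
          have g1 : hw n hne1.choose = w1 := congrArg Prod.snd hx1φ
          have g2 : hw n hne2.choose = w2 := congrArg Prod.snd hx2φ
          rw [← g1, ← g2, key0 _ hx1D, key0 _ hx2D, hBeq]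
        have h2 := Finset.card_le_card_of_injOn σ (fun _ _ => Finset.mem_univ _) hinj
        have h3 : (Finset.univ : Finset (↥J → Bool)).card = 2^(J.card) := by
          rw [Finset.card_univ]
          rw [Fintype.card_fun, Fintype.card_coe]
          norm_num
        have h4 : supp.card ≤ 2^q := by
          rw [h3] at h2
          exact le_trans h2 (Nat.pow_le_pow_right (by norm_num) hJq)
        calc (supp.card : ℝ) ≤ ((2^q : ℕ) : ℝ) := Nat.cast_le.2 h4
          _ = K := by rw [hK]; push_cast; ring
      have hsum_mz : ∑ w ∈ Finset.range (n+1), mzv (c,w) ≤ K * T := by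
        have h0 : ∑ w ∈ Finset.range (n+1), mzv (c,w) = ∑ w ∈ supp, mzv (c,w) := by
          rw [hsupp]
          refine (Finset.sum_filter_of_ne (fun w _ hne => ?_)).symm
          have hle : mzv (c,w) ≤ nv (c,w) :=
            cnt_mono D _ _ (fun x _ hx => hx.2.1)
          have := hmzvnn (c,w)
          rcases lt_or_eq_of_le this with h'|h'
          · linarith
          · exact absurd h'.symm hne
        rw [h0]
        calc ∑ w ∈ supp, mzv (c,w) ≤ ∑ w ∈ supp, T :=
              Finset.sum_le_sum (fun w hw => hprefix w (Finset.mem_filter.1 hw).1)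
          _ = supp.card * T := by rw [Finset.sum_const, nsmul_eq_mul]
          _ ≤ K * T := mul_le_mul_of_nonneg_right hsuppK hTnn
      have hma_le : ∑ w ∈ Finset.range (n+1), mav (c,w)
          ≤ ∑ w ∈ Finset.range (n+1), mzv (c,w) := by
        rw [Finset.sum_range_succ' (fun w => mav (c,w)) n]
        rw [hma0 c, add_zero]
        calc ∑ w ∈ Finset.range n, mav (c, w+1)
            = ∑ w ∈ Finset.range n, mzv (c,w) :=
              Finset.sum_congr rfl (fun w _ => hpair c w)
          _ ≤ ∑ w ∈ Finset.range (n+1), mzv (c,w) := by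
              apply Finset.sum_le_sum_of_subset_of_nonneg
              · exact Finset.range_subset_range.2 (by omega)
              · intro _ _ _; exact hmzvnn _
      have htotc : ∑ w ∈ Finset.range (n+1), nv (c,w)
          = ∑ w ∈ Finset.range (n+1), mav (c,w) + ∑ w ∈ Finset.range (n+1), mzv (c,w)
            + ∑ w ∈ Finset.range (n+1), bv (c,w) := by
        rw [← Finset.sum_add_distrib, ← Finset.sum_add_distrib]
        refine Finset.sum_congr rfl (fun w _ => ?_)
        have h1 := hsplit1 (c,w)
        have h2 := hsplit2 (c,w)
        have h3 := hsplit2z (c,w)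
        have h4 := hsplit3 (c,w)
        linarith
      have hTS : T = (∑ w ∈ Finset.range (n+1), |av (c,w) - zv (c,w)|)
          + ∑ w ∈ Finset.range (n+1), bv (c,w) := Finset.sum_add_distrib
      have hβcnn : 0 ≤ ∑ w ∈ Finset.range (n+1), bv (c,w) :=
        Finset.sum_nonneg (fun w _ => hbvnn _)
      have hSnn : 0 ≤ ∑ w ∈ Finset.range (n+1), |av (c,w) - zv (c,w)| :=
        Finset.sum_nonneg (fun w _ => abs_nonneg _)
      have h9 : (∑ w ∈ Finset.range (n+1), nv (c,w)
            - ∑ w ∈ Finset.range (n+1), bv (c,w))/2 ≤ K * T := by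
        have := le_trans (by linarith [htotc, hma_le] :
          (∑ w ∈ Finset.range (n+1), nv (c,w)
            - ∑ w ∈ Finset.range (n+1), bv (c,w))/2
            ≤ ∑ w ∈ Finset.range (n+1), mzv (c,w)) hsum_mz
        exact this
      rw [hTS] at h9
      rw [sub_le_iff_le_add, div_le_iff₀ (by positivity : (0:ℝ) < 2*K)]
      nlinarith [h9, hβcnn, hK1, hSnn]
    -- totals over the groups
    have hmemW : ∀ x ∈ D, φ x ∈ W := by
      intro x hx
      rw [hW, Finset.mem_product]
      constructor
      · show (φ x).1 ∈ C'
        rw [hC']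
        exact Finset.mem_image.2 ⟨Bm x, Finset.mem_univ _, rfl⟩
      · show hw n x ∈ Finset.range (n+1)
        exact Finset.mem_range.2 (by have := hw_le x; omega)
    have htotN : ∑ c ∈ C', ∑ w ∈ Finset.range (n+1), nv (c,w) = N := by
      have h1 : cnt D (fun _ => True) = ∑ v ∈ W, cnt D (fun x => True ∧ φ x = v) :=
        cnt_fiber D _ φ W (fun x hx _ => hmemW x hx)
      rw [cnt_total] at h1
      have h2 : ∑ v ∈ W, cnt D (fun x => True ∧ φ x = v) = ∑ v ∈ W, nv v :=
        Finset.sum_congr rfl (fun v _ => cnt_congr _ _ _ (fun x _ => by tauto))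
      have h3 : ∑ v ∈ W, nv v = ∑ c ∈ C', ∑ w ∈ Finset.range (n+1), nv (c,w) := by
        rw [hW]
        exact Finset.sum_product _ _ _
      rw [← h3, ← h2, ← h1, hNdef]
    have htotβ : ∑ c ∈ C', ∑ w ∈ Finset.range (n+1), bv (c,w) = β := by
      have h1 : cnt D (fun x => flipBit i x ∉ D)
          = ∑ v ∈ W, cnt D (fun x => flipBit i x ∉ D ∧ φ x = v) :=
        cnt_fiber D _ φ W (fun x hx _ => hmemW x hx)
      have h2 : ∑ v ∈ W, cnt D (fun x => flipBit i x ∉ D ∧ φ x = v) = ∑ v ∈ W, bv v :=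
        Finset.sum_congr rfl (fun v _ => cnt_congr _ _ _ (fun x _ => by tauto))
      have h3 : ∑ v ∈ W, bv v = ∑ c ∈ C', ∑ w ∈ Finset.range (n+1), bv (c,w) := by
        rw [hW]
        exact Finset.sum_product _ _ _
      rw [← h3, ← h2, ← h1, hβ]
    -- assemble
    calc N/(2*K) - 2*β
        = (∑ c ∈ C', ∑ w ∈ Finset.range (n+1), nv (c,w))/(2*K)
          - 2*(∑ c ∈ C', ∑ w ∈ Finset.range (n+1), bv (c,w)) := by rw [htotN, htotβ]
      _ = ∑ c ∈ C', ((∑ w ∈ Finset.range (n+1), nv (c,w))/(2*K)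
          - 2*(∑ w ∈ Finset.range (n+1), bv (c,w))) := by
          rw [Finset.sum_sub_distrib, Finset.sum_div, Finset.mul_sum]
      _ ≤ ∑ c ∈ C', ∑ w ∈ Finset.range (n+1), |av (c,w) - zv (c,w)| :=
          Finset.sum_le_sum hgroup
      _ = ∑ v ∈ W, |av v - zv v| := by
          rw [hW]
          exact (Finset.sum_product C' (Finset.range (n+1)) (fun v => |av v - zv v|)).symm
      _ ≤ ∑ b : Fin m → Bool, |d b| := hS2
  -- relate β to the goal's quantity
  have hβeq : ((D.filter (fun x => flipBit i x ∉ D)).card : ℝ) = β := by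
    rw [hβ, cnt_eq]
  -- final numeric assembly
  rcases Nat.eq_zero_or_pos q with hq0 | hq1
  · -- q = 0 : prove β = N
    subst hq0
    have hJ0 : ∀ j, ¬ DependsOnCoord (g j) i := by
      intro j hj
      have : j ∈ J := by rw [hJ]; simp [hj]
      have := Finset.card_pos.2 ⟨j, this⟩
      omega
    have hall : ∀ x ∈ D, flipBit i x ∉ D := by
      intro x hx hfl
      have hBf : Bm (flipBit i x) = Bm x := funext (fun j => not_dependsOn (hJ0 j) x)
      have h1 := key0 _ hfl
      rw [hBf, ← key0 x hx] at h1
      cases hxi : x i with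
      | true => have := hw_flip_true i x hxi; omega
      | false => have := hw_flip_false i x hxi; omega
    have hβN : β = N := by
      rw [hβ, hNdef, ← cnt_total D]
      exact cnt_congr _ _ _ (fun x hx => by simp [hall x hx])
    have hexp : (2:ℝ) ^ (-((6:ℝ) * ((0:ℕ):ℝ))) = 1 := by
      norm_num
    rw [hβeq, hβN, hexp]
    have hT : 0 ≤ (∑ b : Fin m → Bool, (d b)^2 / nb b)/(4*N) :=
      div_nonneg hT2nn (by linarith)
    have hNN : N/N = 1 := div_self (ne_of_gt hN0)
    linarith [hA]
  · -- q ≥ 1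
    have hKpos : (0:ℝ) < K := by rw [hK]; positivity
    have hpow : (2:ℝ) ^ (-((6:ℝ) * (q:ℝ))) ≤ 1/(16*K^2) := by
      have h1 : (2:ℝ) ^ (-((6:ℝ) * (q:ℝ))) = ((2:ℝ)^(6*q:ℕ))⁻¹ := by
        rw [← Real.rpow_natCast 2 (6*q), ← Real.rpow_neg (by norm_num)]
        push_cast
        ring_nf
      have h2 : 16*K^2 = (2:ℝ)^(2*q+4:ℕ) := by
        rw [hK, ← pow_mul, pow_add]
        norm_num
        ring
      have h3 : (2:ℝ)^(2*q+4:ℕ) ≤ (2:ℝ)^(6*q:ℕ) :=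
        pow_le_pow_right₀ (by norm_num) (by omega)
      rw [h1, h2, ← one_div]
      apply one_div_le_one_div_of_le (by positivity) h3
    rw [hβeq]
    have hpK : 0 < 16*K^2 := by positivity
    rcases le_or_gt (N/(2*K)) (2*β) with hcase|hcase
    · -- large broken probability
      have h5 : 1/(4*K) ≤ β/N := by
        have hc2 : N ≤ 2*β*(2*K) := by
          rw [div_le_iff₀ (by positivity : (0:ℝ) < 2*K)] at hcase
          linarith
        rw [div_le_div_iff₀ (by positivity) hN0]
        nlinarith
      have h6 : (2:ℝ) ^ (-((6:ℝ) * (q:ℝ))) ≤ 1/(4*K) := by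
        apply le_trans hpow
        apply one_div_le_one_div_of_le (by positivity)
        nlinarith [hK1]
      have hT : 0 ≤ (∑ b : Fin m → Bool, (d b)^2 / nb b)/(4*N) :=
        div_nonneg hT2nn (by linarith)
      linarith [hA]
    · -- main case
      have h8 : 0 ≤ N/(2*K) - 2*β := by linarith
      have h9 : (N/(2*K) - 2*β)^2 ≤ N * ∑ b : Fin m → Bool, (d b)^2 / nb b :=
        le_trans (pow_le_pow_left₀ h8 hC 2) hB
      have hNK : N/K ≤ N := by
        rw [div_le_iff₀ (by positivity)]
        nlinarith [hK1, hN0]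
      have h10 : N*(N/(4*K^2) - 2*β) ≤ (N/(2*K) - 2*β)^2 := by
        have e : (N/(2*K) - 2*β)^2 = N*(N/(4*K^2)) - (N/K)*(2*β) + 4*β^2 := by
          field_simp
          ring
        nlinarith [sq_nonneg β, hβnn, hN0, hNK]
      have h11 : N/(4*K^2) - 2*β ≤ ∑ b : Fin m → Bool, (d b)^2 / nb b :=
        le_of_mul_le_mul_left (le_trans h10 h9) hN0
      have e16 : (N/(4*K^2) - 2*β)/(4*N) = 1/(16*K^2) - β/(2*N) := by
        field_simp
        ring
      have h12 : 1/(16*K^2) - β/(2*N) ≤ (∑ b : Fin m → Bool, (d b)^2 / nb b)/(4*N) := by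
        rw [← e16]
        exact (div_le_div_iff_of_pos_right (by positivity : (0:ℝ) < 4*N)).2 h11
      have h15 : β/(2*N) ≤ β/N := by
        have e17 : β/(2*N) = (β/N)/2 := by ring
        have := div_nonneg hβnn (le_of_lt hN0)
        rw [e17]
        linarith
      linarith [hA, hpow, h12, h15]
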